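/- Let g ~ N(0, I_N), E > 0, and k ≥ 1. The probability that there exist two distinct points x, x' ∈ {±1}^N with |⟨g,x⟩| ≤ 2^{-E}, |⟨g,x'⟩| ≤ 2^{-E}, and ‖x - x'‖ ≤ 2√k is at most 2^{-E} · 2^{k} · (eN)^{k} · C for an absolute constant C. In particular, if E ≥ ω(k log N) this probability tends to 0. -/

import Mathlib

open MeasureTheory ProbabilityTheory Filter

/-- The standard Gaussian measure on `ℝ^N`. -/
noncomputable def stdGaussianPi (N : ℕ) : Measure (Fin N → ℝ) :=
  Measure.pi fun _ => gaussianReal 0 1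

/-- The event that there exist two distinct points of `{±1}^N`, within
Euclidean distance `2√k` of each other, both with energy at least `E`. -/
def BadSet (N : ℕ) (E : ℝ) (k : ℕ) : Set (Fin N → ℝ) :=
  {g | ∃ x x' : Fin N → ℝ, (∀ i, x i = 1 ∨ x i = -1) ∧ (∀ i, x' i = 1 ∨ x' i = -1) ∧
    x ≠ x' ∧ |∑ i, g i * x i| ≤ (2 : ℝ) ^ (-E) ∧ |∑ i, g i * x' i| ≤ (2 : ℝ) ^ (-E) ∧
    ∑ i, (x i - x' i) ^ 2 ≤ 4 * k}

/-!
If `x ≠ x'` are sign vectors at Hamming distance at most `k`, then `d = x - x'` has entries in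
`{-2, 0, 2}`, a nonempty support `J` with `#J ≤ k`, and `|⟨g, d⟩| ≤ 2 · 2^{-E}`. Since `⟨g, d⟩` is
`N(0, ‖d‖²)` with `‖d‖² ≥ 4`, its density is at most `1 / √(8π)`, so this event has probability at
most `2^{-E}`. There are at most `N^k` supports and `2^k` sign patterns on each, and a union bound
gives `2^{-E} 2^k N^k ≤ 2^{-E} N^{2k} = exp (k log N (2 - (E / (k log N)) log 2))`, which tends to
`0` when `E / (k log N) → ∞`.
-/

open Finset
open scoped NNReal ENNReal

namespace ProbabilityTheory

lemma gaussianPDFReal_le (μ : ℝ) (v : ℝ≥0) (x : ℝ) :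
    gaussianPDFReal μ v x ≤ (√(2 * Real.pi * v))⁻¹ := by
  rw [gaussianPDFReal]
  refine mul_le_of_le_one_right (by positivity) (Real.exp_le_one_iff.2 ?_)
  exact div_nonpos_of_nonpos_of_nonneg (neg_nonpos.2 (sq_nonneg _)) (by positivity)

lemma gaussianReal_le_ofReal_mul_volume (μ : ℝ) {v : ℝ≥0} (hv : v ≠ 0) (s : Set ℝ) :
    gaussianReal μ v s ≤ ENNReal.ofReal (√(2 * Real.pi * v))⁻¹ * volume s := by
  rw [gaussianReal_apply μ hv, ← setLIntegral_const]
  exact lintegral_mono fun x => ENNReal.ofReal_le_ofReal (gaussianPDFReal_le μ v x)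

lemma map_pi_gaussianReal_sum_mul {ι : Type*} [Fintype ι] (v : ι → ℝ) :
    (Measure.pi fun _ : ι => gaussianReal 0 1).map (fun g => ∑ i, g i * v i) =
      gaussianReal 0 (∑ i, v i ^ 2).toNNReal := by
  set L := innerSL ℝ (WithLp.toLp 2 v : EuclideanSpace ℝ ι)
  have hL : (fun g : ι → ℝ => ∑ i, g i * v i) = L ∘ WithLp.toLp 2 := by
    ext g
    simp [L, mul_comm, EuclideanSpace.inner_eq_star_dotProduct, dotProduct]
  rw [hL, ← Measure.map_map (by fun_prop) (by fun_prop), map_pi_eq_stdGaussian,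
    IsGaussian.map_eq_gaussianReal, integral_strongDual_stdGaussian, variance_dual_stdGaussian,
    innerSL_apply_norm, EuclideanSpace.real_norm_sq_eq]

end ProbabilityTheory

lemma stdGaussianPi_abs_sum_mul_le {N : ℕ} {v : Fin N → ℝ} (hv : v ≠ 0) (r : ℝ) :
    stdGaussianPi N {g | |∑ i, g i * v i| ≤ r} ≤
      ENNReal.ofReal (2 * r / √(2 * Real.pi * ∑ i, v i ^ 2)) := by
  have hs : 0 < ∑ i, v i ^ 2 := by
    obtain ⟨i, hi⟩ := Function.ne_iff.1 hv
    exact (pow_two_pos_of_ne_zero hi).trans_le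
      (single_le_sum (fun j _ => sq_nonneg (v j)) (mem_univ i))
  have hmeas : Measurable fun g : Fin N → ℝ => ∑ i, g i * v i := by fun_prop
  have hset : {g : Fin N → ℝ | |∑ i, g i * v i| ≤ r} =
      (fun g => ∑ i, g i * v i) ⁻¹' Set.Icc (-r) r := by
    ext g
    simp [abs_le]
  rw [hset, stdGaussianPi, ← Measure.map_apply hmeas measurableSet_Icc,
    map_pi_gaussianReal_sum_mul]
  refine (gaussianReal_le_ofReal_mul_volume 0 (by simpa using hs) _).trans_eq ?_
  rw [Real.volume_Icc, ← ENNReal.ofReal_mul (by positivity), Real.coe_toNNReal _ hs.le]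
  ring_nf

lemma stdGaussianPi_abs_sum_mul_le_of_four_le {N : ℕ} {v : Fin N → ℝ}
    (hv : 4 ≤ ∑ i, v i ^ 2) {t : ℝ} (ht : 0 ≤ t) :
    stdGaussianPi N {g | |∑ i, g i * v i| ≤ 2 * t} ≤ ENNReal.ofReal t := by
  have hv0 : v ≠ 0 := by
    rintro rfl
    norm_num at hv
  refine (stdGaussianPi_abs_sum_mul_le hv0 _).trans (ENNReal.ofReal_le_ofReal ?_)
  have hsqrt : 4 ≤ √(2 * Real.pi * ∑ i, v i ^ 2) :=
    Real.le_sqrt_of_sq_le (by nlinarith [Real.pi_gt_three])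
  rw [div_le_iff₀ (by positivity)]
  nlinarith

lemma Finset.exists_image_fin_eq {α : Type*} [DecidableEq α] {J : Finset α} {k : ℕ}
    (hJ : J.Nonempty) (hk : #J ≤ k) : ∃ f : Fin k → α, univ.image f = J := by
  obtain ⟨a, ha⟩ := hJ
  refine ⟨fun i => if h : (i : ℕ) < #J then J.equivFin.symm ⟨i, h⟩ else a, ?_⟩
  ext b
  simp only [mem_image, mem_univ, true_and]
  constructor
  · rintro ⟨i, rfl⟩
    split_ifs
    · exact Subtype.property _
    · exact ha
  · intro hb
    exact ⟨Fin.castLE hk (J.equivFin ⟨b, hb⟩), by simp⟩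

lemma card_filter_nonempty_card_le {α : Type*} [Fintype α] [DecidableEq α] (k : ℕ) :
    #{J : Finset α | J.Nonempty ∧ #J ≤ k} ≤ Fintype.card α ^ k :=
  calc #{J : Finset α | J.Nonempty ∧ #J ≤ k}
      ≤ #((univ : Finset (Fin k → α)).image fun f => univ.image f) := by
        refine card_le_card fun J hJ => ?_
        rw [mem_filter] at hJ
        simpa using J.exists_image_fin_eq hJ.2.1 hJ.2.2
    _ ≤ Fintype.card α ^ k := by
        simpa using card_image_le (s := (univ : Finset (Fin k → α)))

/-- The possible differences `x - x'` of two distinct sign vectors at Hamming distance at most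
`k`, sorted by their support `J`. -/
noncomputable def signDiffs (N k : ℕ) : Finset (Fin N → ℝ) :=
  ({J | J.Nonempty ∧ #J ≤ k} : Finset (Finset (Fin N))).biUnion fun J =>
    Fintype.piFinset fun i => if i ∈ J then {-2, 2} else {0}

lemma card_signDiffs_le (N k : ℕ) : #(signDiffs N k) ≤ 2 ^ k * N ^ k := by
  have hpi : ∀ J : Finset (Fin N),
      #(Fintype.piFinset fun i => if i ∈ J then ({-2, 2} : Finset ℝ) else {0}) = 2 ^ #J := by
    intro J
    rw [Fintype.card_piFinset]
    simp [apply_ite Finset.card, prod_ite_mem, card_pair (show (-2 : ℝ) ≠ 2 by norm_num)]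
  calc #(signDiffs N k)
      ≤ ∑ J ∈ ({J | J.Nonempty ∧ #J ≤ k} : Finset (Finset (Fin N))), 2 ^ #J :=
        card_biUnion_le.trans_eq (sum_congr rfl fun J _ => hpi J)
    _ ≤ ∑ _J ∈ ({J | J.Nonempty ∧ #J ≤ k} : Finset (Finset (Fin N))), 2 ^ k :=
        sum_le_sum fun J hJ => Nat.pow_le_pow_right two_pos (mem_filter.1 hJ).2.2
    _ ≤ 2 ^ k * N ^ k := by
        rw [sum_const, smul_eq_mul, mul_comm]
        simpa using Nat.mul_le_mul_left (2 ^ k) (card_filter_nonempty_card_le (α := Fin N) k)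

lemma four_le_sum_sq_of_mem_signDiffs {N k : ℕ} {d : Fin N → ℝ} (hd : d ∈ signDiffs N k) :
    4 ≤ ∑ i, d i ^ 2 := by
  obtain ⟨J, hJ, hdJ⟩ := mem_biUnion.1 hd
  obtain ⟨i, hi⟩ := (mem_filter.1 hJ).2.1
  have hdi : d i ^ 2 = 4 := by
    have := Fintype.mem_piFinset.1 hdJ i
    rw [if_pos hi, mem_insert, mem_singleton] at this
    rcases this with h | h <;> norm_num [h]
  exact hdi ▸ single_le_sum (fun j _ => sq_nonneg (d j)) (mem_univ i)

section SignVectors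

variable {N : ℕ} {x x' : Fin N → ℝ}

lemma sum_sq_sub_eq_four_mul_card (hx : ∀ i, x i = 1 ∨ x i = -1)
    (hx' : ∀ i, x' i = 1 ∨ x' i = -1) :
    ∑ i, (x i - x' i) ^ 2 = 4 * #{i | x i ≠ x' i} := by
  rw [card_filter, Nat.cast_sum, mul_sum]
  refine sum_congr rfl fun i _ => ?_
  rcases hx i with h | h <;> rcases hx' i with h' | h' <;> norm_num [h, h']

lemma sub_mem_signDiffs {k : ℕ} (hx : ∀ i, x i = 1 ∨ x i = -1)
    (hx' : ∀ i, x' i = 1 ∨ x' i = -1) (hne : x ≠ x') (hdist : ∑ i, (x i - x' i) ^ 2 ≤ 4 * k) :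
    x - x' ∈ signDiffs N k := by
  refine mem_biUnion.2 ⟨({i | x i ≠ x' i} : Finset (Fin N)), mem_filter.2 ⟨mem_univ _, ?_, ?_⟩, ?_⟩
  · obtain ⟨i, hi⟩ := Function.ne_iff.1 hne
    exact ⟨i, by simpa using hi⟩
  · rw [sum_sq_sub_eq_four_mul_card hx hx'] at hdist
    exact_mod_cast le_of_mul_le_mul_left hdist four_pos
  · refine Fintype.mem_piFinset.2 fun i => ?_
    rcases hx i with h | h <;> rcases hx' i with h' | h' <;> norm_num [h, h']

end SignVectors

lemma badSet_subset_biUnion_signDiffs (N : ℕ) (E : ℝ) (k : ℕ) :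
    BadSet N E k ⊆ ⋃ d ∈ signDiffs N k, {g | |∑ i, g i * d i| ≤ 2 * (2 : ℝ) ^ (-E)} := by
  rintro g ⟨x, x', hx, hx', hne, hgx, hgx', hdist⟩
  refine Set.mem_biUnion (sub_mem_signDiffs hx hx' hne hdist) ?_
  have hsplit : ∑ i, g i * (x - x') i = ∑ i, g i * x i - ∑ i, g i * x' i := by
    simp only [Pi.sub_apply, mul_sub, sum_sub_distrib]
  show |∑ i, g i * (x - x') i| ≤ 2 * (2 : ℝ) ^ (-E)
  rw [hsplit]
  linarith [abs_sub (∑ i, g i * x i) (∑ i, g i * x' i)]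

lemma stdGaussianPi_badSet_le (N : ℕ) (E : ℝ) (k : ℕ) :
    stdGaussianPi N (BadSet N E k) ≤ ENNReal.ofReal ((2 : ℝ) ^ (-E) * 2 ^ k * N ^ k) := by
  set t := (2 : ℝ) ^ (-E)
  have ht : 0 ≤ t := by positivity
  calc stdGaussianPi N (BadSet N E k)
      ≤ ∑ d ∈ signDiffs N k, stdGaussianPi N {g | |∑ i, g i * d i| ≤ 2 * t} :=
        (measure_mono (badSet_subset_biUnion_signDiffs N E k)).trans
          (measure_biUnion_finset_le _ _)
    _ ≤ ∑ _d ∈ signDiffs N k, ENNReal.ofReal t :=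
        sum_le_sum fun d hd =>
          stdGaussianPi_abs_sum_mul_le_of_four_le (four_le_sum_sq_of_mem_signDiffs hd) ht
    _ = ENNReal.ofReal (#(signDiffs N k) * t) := by
        rw [sum_const, nsmul_eq_mul, ENNReal.ofReal_mul (by positivity), ENNReal.ofReal_natCast]
    _ ≤ ENNReal.ofReal (t * 2 ^ k * N ^ k) := by
        refine ENNReal.ofReal_le_ofReal ?_
        have hcard : (#(signDiffs N k) : ℝ) ≤ 2 ^ k * N ^ k := by
          exact_mod_cast card_signDiffs_le N k
        nlinarith

lemma tendsto_mul_sub_atBot {ι : Type*} {l : Filter ι} {m r : ι → ℝ} {c : ℝ} (a : ℝ)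
    (hc : 0 < c) (hm : ∀ n, c ≤ m n) (hr : Tendsto r l atTop) :
    Tendsto (fun n => m n * (a - r n)) l atBot := by
  have hsub : Tendsto (fun n => a - r n) l atBot :=
    tendsto_atBot_add_const_left l a (tendsto_neg_atTop_atBot.comp hr)
  refine tendsto_atBot_mono' l ?_ (hsub.const_mul_atBot hc)
  filter_upwards [hsub.eventually_le_atBot 0] with n hn
  exact mul_le_mul_of_nonpos_right (hm n) hn

lemma two_rpow_neg_mul_pow_le_exp {N k : ℕ} (hN : 2 ≤ N) (hk : 1 ≤ k) (E : ℝ) :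
    (2 : ℝ) ^ (-E) * 2 ^ k * N ^ k ≤
      Real.exp (k * Real.log N * (2 - E / (k * Real.log N) * Real.log 2)) := by
  have hlogN : 0 < Real.log N := Real.log_pos (by exact_mod_cast hN)
  have hk0 : (0 : ℝ) < k := by exact_mod_cast hk
  have h2N : (2 : ℝ) * N ≤ (N : ℝ) ^ 2 := by
    have : (2 : ℝ) ≤ N := by exact_mod_cast hN
    nlinarith
  calc (2 : ℝ) ^ (-E) * 2 ^ k * N ^ k = 2 ^ (-E) * (2 * N) ^ k := by ring
    _ ≤ 2 ^ (-E) * (N ^ 2) ^ k := by gcongr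
    _ = _ := by
      rw [Real.rpow_def_of_pos two_pos, ← pow_mul,
        ← Real.exp_log (by positivity : (0 : ℝ) < N ^ (2 * k)), ← Real.exp_add, Real.log_pow]
      congr 1
      field_simp
      push_cast
      ring

theorem stmt15 :
    ∃ C : ℝ, 0 < C ∧
      (∀ (N : ℕ) (E : ℝ) (k : ℕ), 0 < E → 1 ≤ k →
        stdGaussianPi N (BadSet N E k) ≤
          ENNReal.ofReal ((2 : ℝ) ^ (-E) * 2 ^ (k : ℕ) * (Real.exp 1 * N) ^ (k : ℕ) * C)) ∧
      (∀ (Nn kn : ℕ → ℕ) (En : ℕ → ℝ), (∀ n, 2 ≤ Nn n) → (∀ n, 1 ≤ kn n) →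
        (∀ n, 0 < En n) →
        Tendsto (fun n => En n / (kn n * Real.log (Nn n))) atTop atTop →
        Tendsto (fun n => stdGaussianPi (Nn n) (BadSet (Nn n) (En n) (kn n)))
          atTop (nhds 0)) := by
  refine ⟨1, one_pos, fun N E k _ _ => ?_, fun Nn kn En hN hk _ hr => ?_⟩
  · refine (stdGaussianPi_badSet_le N E k).trans (ENNReal.ofReal_le_ofReal ?_)
    have hN : (N : ℝ) ^ k ≤ (Real.exp 1 * N) ^ k :=
      pow_le_pow_left₀ (by positivity) (le_mul_of_one_le_left (by positivity)
        (Real.one_le_exp zero_le_one)) k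
    rw [mul_one]
    exact mul_le_mul_of_nonneg_left hN (by positivity)
  · have hm : ∀ n, Real.log 2 ≤ kn n * Real.log (Nn n) := fun n => by
      have hkn : (1 : ℝ) ≤ kn n := by exact_mod_cast hk n
      have hlog : Real.log 2 ≤ Real.log (Nn n) := Real.log_le_log two_pos (by exact_mod_cast hN n)
      nlinarith [Real.log_pos one_lt_two]
    have hexp := Real.tendsto_exp_atBot.comp (tendsto_mul_sub_atBot 2 (Real.log_pos one_lt_two) hm
      (hr.atTop_mul_const (Real.log_pos one_lt_two)))
    refine tendsto_of_tendsto_of_tendsto_of_le_of_le tendsto_const_nhds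
      (by simpa using ENNReal.tendsto_ofReal hexp) (fun _ => zero_le) fun n => ?_
    exact (stdGaussianPi_badSet_le _ _ _).trans
      (ENNReal.ofReal_le_ofReal (two_rpow_neg_mul_pow_le_exp (hN n) (hk n) (En n)))
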